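/- Suppose t_∞ := lim_{n→∞} (l_1⋯l_n)/(r_1⋯r_n) exists and equals 0. Then for any non-decreasing sequence of stopping times (T_m)_{m≥1} with E[T_m] < ∞ for every m and T_m → T_∂ almost surely, E[X_{T_m}] → +∞ as m → ∞. -/

import Mathlib

/-!
`x_n = t_0 + ⋯ + t_{n-1}` is the scale function of the chain: `x(X_m)` is a martingale whose
increments are bounded by `sup t`, so optional stopping gives `E[x(X_{T_m})] = x_k ≥ 1` as soon as
`E[T_m] < ∞`. The truncation `x(min(·, j))` solves the Poisson equation with source
`r_j t_j · 1_{j}`, hence the expected number of visits to each `j ≥ 1` is finite, and `X_{T_m}`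
eventually leaves every window `[1, N]`: either `T_m = T_∂` eventually, or `T_m → ∞`. Since
`t_n → 0`, Cesàro gives `x_n = o(n)`, so `x_k ≤ x_N P(1 ≤ X_{T_m} ≤ N) + ε E[X_{T_m}]` with the
first term vanishing, which forces `E[X_{T_m}] → ∞`.
-/

open MeasureTheory Filter Topology Finset
open scoped ENNReal NNReal Classical

/-- Partial products `t_n = (l_1 ⋯ l_n)/(r_1 ⋯ r_n)`, with `t_0 = 1`. -/
noncomputable def tp (l r : ℕ → ℝ) (n : ℕ) : ℝ :=
  (∏ i ∈ Finset.Icc 1 n, l i) / (∏ i ∈ Finset.Icc 1 n, r i)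

/-- `x_n = Σ_{i=0}^{n-1} t_i`. -/
noncomputable def xp (l r : ℕ → ℝ) (n : ℕ) : ℝ :=
  ∑ i ∈ Finset.range n, tp l r i

/-- The natural filtration of the process `X` (σ-algebra generated by `X_0, …, X_m`). -/
def natFilt {Ω : Type*} (X : ℕ → Ω → ℕ) (m : ℕ) : MeasurableSpace Ω :=
  ⨆ i ∈ Finset.range (m + 1), MeasurableSpace.comap (X i) ⊤

/-- A birth–death chain on ℕ started at `k`, with up–probabilities `r n` and
down–probabilities `l n` for states `n ≥ 1`, and `0` absorbing.  The Markov
property is encoded by conditioning on arbitrary events of the natural filtration. -/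
structure IsBDChain {Ω : Type*} [MeasurableSpace Ω] (P : Measure Ω)
    (X : ℕ → Ω → ℕ) (k : ℕ) (l r : ℕ → ℝ) : Prop where
  isProb : IsProbabilityMeasure P
  one_le_k : 1 ≤ k
  l_pos : ∀ n, 1 ≤ n → 0 < l n
  r_pos : ∀ n, 1 ≤ n → 0 < r n
  lr_one : ∀ n, 1 ≤ n → l n + r n = 1
  meas : ∀ m, Measurable (X m)
  init : ∀ᵐ ω ∂P, X 0 ω = k
  absorb : ∀ᵐ ω ∂P, ∀ m, X m ω = 0 → X (m + 1) ω = 0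
  step_up : ∀ m n, 1 ≤ n → ∀ A : Set Ω, MeasurableSet[natFilt X m] A →
    P (A ∩ {ω | X m ω = n ∧ X (m + 1) ω = n + 1}) =
      ENNReal.ofReal (r n) * P (A ∩ {ω | X m ω = n})
  step_down : ∀ m n, 1 ≤ n → ∀ A : Set Ω, MeasurableSet[natFilt X m] A →
    P (A ∩ {ω | X m ω = n ∧ X (m + 1) ω = n - 1}) =
      ENNReal.ofReal (l n) * P (A ∩ {ω | X m ω = n})

/-- A (finite-valued) stopping time for the natural filtration of `X`. -/
def IsBDStop {Ω : Type*} (X : ℕ → Ω → ℕ) (T : Ω → ℕ) : Prop :=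
  ∀ m, MeasurableSet[natFilt X m] {ω | T ω = m}

/-- An extended-ℕ-valued stopping time for the natural filtration of `X`. -/
def IsBDStopE {Ω : Type*} (X : ℕ → Ω → ℕ) (T : Ω → ℕ∞) : Prop :=
  ∀ m : ℕ, MeasurableSet[natFilt X m] {ω | T ω = (m : ℕ∞)}

/-- First hitting time of the set `S ⊆ ℕ` by the path `m ↦ X m ω`, valued in `ℕ∞`. -/
noncomputable def hitTime {Ω : Type*} (X : ℕ → Ω → ℕ) (S : Set ℕ) (ω : Ω) : ℕ∞ :=
  sInf ((fun m : ℕ => (m : ℕ∞)) '' {m | X m ω ∈ S})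

/-- `T_∂`: the first hitting time of `0`, with value `∞` if `0` is never hit. -/
noncomputable def hit0 {Ω : Type*} (X : ℕ → Ω → ℕ) (ω : Ω) : ℕ∞ :=
  hitTime X {0} ω

/-- `G_T^n`: the number of times `m` with `0 ≤ m ≤ T-1` and `X_m = n` (finite `T`). -/
def count {Ω : Type*} (X : ℕ → Ω → ℕ) (n : ℕ) (T : Ω → ℕ) (ω : Ω) : ℕ :=
  ((Finset.range (T ω)).filter fun m => X m ω = n).card

/-- `G_τ^n` for an `ℕ∞`-valued time `τ`, valued in `ℝ≥0∞`. -/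
noncomputable def countE {Ω : Type*} (X : ℕ → Ω → ℕ) (n : ℕ) (τ : Ω → ℕ∞) (ω : Ω) : ℝ≥0∞ :=
  ∑' m : ℕ, if (m : ℕ∞) < τ ω ∧ X m ω = n then 1 else 0

section Scale

variable {l r : ℕ → ℝ}

lemma tp_pos (hl : ∀ n, 1 ≤ n → 0 < l n) (hr : ∀ n, 1 ≤ n → 0 < r n) (n : ℕ) :
    0 < tp l r n :=
  div_pos (prod_pos fun i hi => hl i (mem_Icc.mp hi).1)
    (prod_pos fun i hi => hr i (mem_Icc.mp hi).1)

lemma tp_succ (n : ℕ) : tp l r (n + 1) = tp l r n * (l (n + 1) / r (n + 1)) := by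
  simp only [tp, prod_Icc_succ_top (Nat.le_add_left 1 n), div_mul_div_comm]

lemma r_mul_tp_succ (hr : ∀ n, 1 ≤ n → 0 < r n) (n : ℕ) :
    r (n + 1) * tp l r (n + 1) = l (n + 1) * tp l r n := by
  have := (hr (n + 1) (Nat.le_add_left 1 n)).ne'
  rw [tp_succ]
  field_simp

@[simp] lemma xp_zero : xp l r 0 = 0 := by simp [xp]

lemma xp_succ (n : ℕ) : xp l r (n + 1) = xp l r n + tp l r n := sum_range_succ _ _

lemma xp_mono (hl : ∀ n, 1 ≤ n → 0 < l n) (hr : ∀ n, 1 ≤ n → 0 < r n) : Monotone (xp l r) :=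
  monotone_nat_of_le_succ fun n => by rw [xp_succ]; linarith [tp_pos hl hr n]

lemma xp_nonneg (hl : ∀ n, 1 ≤ n → 0 < l n) (hr : ∀ n, 1 ≤ n → 0 < r n) (n : ℕ) :
    0 ≤ xp l r n := by
  simpa using xp_mono hl hr n.zero_le

lemma one_le_xp (hl : ∀ n, 1 ≤ n → 0 < l n) (hr : ∀ n, 1 ≤ n → 0 < r n) {k : ℕ} (hk : 1 ≤ k) :
    1 ≤ xp l r k := by
  simpa [xp_succ, tp] using xp_mono hl hr hk

lemma tendsto_xp_div (htlim : Tendsto (tp l r) atTop (𝓝 0)) :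
    Tendsto (fun n => xp l r n / n) atTop (𝓝 0) := by
  simpa only [xp, div_eq_inv_mul] using htlim.cesaro

lemma xp_harmonic (hr : ∀ n, 1 ≤ n → 0 < r n) (hlr : ∀ n, 1 ≤ n → l n + r n = 1) (n : ℕ) :
    r (n + 1) * xp l r (n + 2) + l (n + 1) * xp l r n = xp l r (n + 1) := by
  linear_combination r (n + 1) * xp_succ (l := l) (r := r) (n + 1)
    - l (n + 1) * xp_succ (l := l) (r := r) n + r_mul_tp_succ (l := l) hr n
    + xp l r (n + 1) * hlr (n + 1) (Nat.le_add_left 1 n)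

lemma xp_min_poisson (hr : ∀ n, 1 ≤ n → 0 < r n) (hlr : ∀ n, 1 ≤ n → l n + r n = 1)
    (j n : ℕ) :
    r (n + 1) * xp l r (min (n + 2) j) + l (n + 1) * xp l r (min n j)
      + (if n + 1 = j then r j * tp l r j else 0) = xp l r (min (n + 1) j) := by
  have harm := xp_harmonic hr hlr n
  rcases lt_trichotomy (n + 1) j with h | rfl | h
  · rw [min_eq_left (by omega), min_eq_left (by omega), min_eq_left h.le, if_neg h.ne, add_zero,
      harm]
  · rw [min_eq_right (by omega), min_eq_left (by omega), min_self, if_pos rfl]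
    linear_combination harm - r (n + 1) * xp_succ (l := l) (r := r) (n + 1)
  · rw [min_eq_right (by omega), min_eq_right (by omega), min_eq_right (by omega),
      if_neg h.ne', add_zero, ← add_mul, add_comm, hlr (n + 1) (Nat.le_add_left 1 n), one_mul]

end Scale

/-- `g = P g + e` on the states `n + 1 ≥ 1`, where `P` is the transition operator of the chain. -/
def SolvesPoissonEq (l r : ℕ → ℝ) (g e : ℕ → ℝ≥0∞) : Prop :=
  ∀ n, ENNReal.ofReal (r (n + 1)) * g (n + 2) + ENNReal.ofReal (l (n + 1)) * g n + e (n + 1)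
    = g (n + 1)

lemma solvesPoissonEq_ofReal {l r : ℕ → ℝ} (hl : ∀ n, 1 ≤ n → 0 < l n)
    (hr : ∀ n, 1 ≤ n → 0 < r n) {g e : ℕ → ℝ} (hg : ∀ n, 0 ≤ g n) (he : ∀ n, 0 ≤ e n)
    (h : ∀ n, r (n + 1) * g (n + 2) + l (n + 1) * g n + e (n + 1) = g (n + 1)) :
    SolvesPoissonEq l r (fun n => ENNReal.ofReal (g n)) (fun n => ENNReal.ofReal (e n)) := by
  intro n
  dsimp only
  have hr' := (hr (n + 1) (Nat.le_add_left 1 n)).le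
  have hl' := (hl (n + 1) (Nat.le_add_left 1 n)).le
  have hup := mul_nonneg hr' (hg (n + 2))
  have hdown := mul_nonneg hl' (hg n)
  rw [← h n, ENNReal.ofReal_add (add_nonneg hup hdown) (he _), ENNReal.ofReal_add hup hdown,
    ENNReal.ofReal_mul hr', ENNReal.ofReal_mul hl']

lemma setLIntegral_eq_tsum_fiber {α β : Type*} [MeasurableSpace α] [MeasurableSpace β]
    [Countable β] [MeasurableSingletonClass β] {μ : Measure α} {s : Set α} (hs : MeasurableSet s)
    {Y : α → β} (hY : Measurable Y) (f : α → ℝ≥0∞) :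
    ∫⁻ a in s, f a ∂μ = ∑' b, ∫⁻ a in s ∩ Y ⁻¹' {b}, f a ∂μ := by
  rw [← lintegral_iUnion (fun b => hs.inter (hY (measurableSet_singleton b)))
    fun _ _ hab => Set.disjoint_left.2 fun _ ha hb => hab (ha.2.symm.trans hb.2),
    ← Set.inter_iUnion, ← Set.preimage_iUnion, Set.iUnion_of_singleton, Set.preimage_univ,
    Set.inter_univ]

lemma measurable_apply_index {α β : Type*} [MeasurableSpace α] [MeasurableSpace β] {τ : α → ℕ}
    (hτ : Measurable τ) {H : ℕ → α → β} (hH : ∀ j, Measurable (H j)) :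
    Measurable fun a => H (τ a) a :=
  (measurable_from_prod_countable_left (f := fun p : α × ℕ => H p.2 p.1) hH).comp
    (measurable_id.prodMk hτ)

lemma exists_ofReal_le_indicator_add_mul {f : ℕ → ℝ} (hf0 : f 0 = 0) (hf : Monotone f)
    (hfo : Tendsto (fun n => f n / n) atTop (𝓝 0)) {δ : ℝ} (hδ : 0 < δ) :
    ∃ N : ℕ, ∀ q : ℕ, ENNReal.ofReal (f q)
      ≤ (Set.Icc 1 N).indicator (fun _ => ENNReal.ofReal (f N)) q + ENNReal.ofReal δ * q := by
  obtain ⟨N, hN⟩ := eventually_atTop.1 (hfo.eventually_lt_const hδ)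
  refine ⟨N, fun q => ?_⟩
  rcases q with _ | q
  · simp [hf0]
  by_cases hq : q + 1 ≤ N
  · rw [Set.indicator_of_mem (show q + 1 ∈ Set.Icc 1 N from ⟨le_add_self, hq⟩)]
    exact le_add_right (ENNReal.ofReal_le_ofReal (hf hq))
  · have hlt := hN (q + 1) (by omega)
    rw [div_lt_iff₀ (by positivity)] at hlt
    calc ENNReal.ofReal (f (q + 1)) ≤ ENNReal.ofReal (δ * (q + 1 : ℕ)) :=
          ENNReal.ofReal_le_ofReal hlt.le
      _ = ENNReal.ofReal δ * (q + 1 : ℕ) := by rw [ENNReal.ofReal_mul hδ.le, ENNReal.ofReal_natCast]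
      _ ≤ _ := le_add_self

lemma tendsto_measure_preimage_of_ae_eventually_notMem {Ω : Type*} [MeasurableSpace Ω]
    {P : Measure Ω} [IsFiniteMeasure P] {Y : ℕ → Ω → ℕ} (hY : ∀ m, Measurable (Y m)) (s : Set ℕ)
    (hesc : ∀ᵐ ω ∂P, ∀ᶠ m in atTop, Y m ω ∉ s) :
    Tendsto (fun m => P (Y m ⁻¹' s)) atTop (𝓝 0) := by
  simpa using tendsto_measure_of_ae_tendsto_indicator_of_isFiniteMeasure atTop
    MeasurableSet.empty (fun m => hY m (Set.to_countable s).measurableSet)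
    (hesc.mono fun ω h => h.mono fun m hm => by simpa using hm)

lemma lintegral_ofReal_comp_le {Ω : Type*} [MeasurableSpace Ω] {P : Measure Ω} {Y : Ω → ℕ}
    (hY : Measurable Y) {f : ℕ → ℝ} {N : ℕ} {δ : ℝ} (hN : ∀ q : ℕ, ENNReal.ofReal (f q)
      ≤ (Set.Icc 1 N).indicator (fun _ => ENNReal.ofReal (f N)) q + ENNReal.ofReal δ * q) :
    ∫⁻ ω, ENNReal.ofReal (f (Y ω)) ∂P
      ≤ ENNReal.ofReal (f N) * P (Y ⁻¹' Set.Icc 1 N)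
        + ENNReal.ofReal δ * ∫⁻ ω, (Y ω : ℝ≥0∞) ∂P := by
  have hind : Measurable fun ω => (Set.Icc 1 N).indicator (fun _ => ENNReal.ofReal (f N)) (Y ω) :=
    (measurable_from_nat (f := (Set.Icc 1 N).indicator fun _ => ENNReal.ofReal (f N))).comp hY
  calc ∫⁻ ω, ENNReal.ofReal (f (Y ω)) ∂P
      ≤ ∫⁻ ω, ((Set.Icc 1 N).indicator (fun _ => ENNReal.ofReal (f N)) (Y ω)
          + ENNReal.ofReal δ * Y ω) ∂P := lintegral_mono fun ω => hN _
    _ = _ := by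
      rw [lintegral_add_left hind, lintegral_indicator_const_comp hY
        (Set.to_countable _).measurableSet, lintegral_const_mul' _ _ ENNReal.ofReal_ne_top]

theorem tendsto_lintegral_top_of_escape {Ω : Type*} [MeasurableSpace Ω] {P : Measure Ω}
    [IsProbabilityMeasure P] {Y : ℕ → Ω → ℕ} (hY : ∀ m, Measurable (Y m)) {f : ℕ → ℝ}
    (hf0 : f 0 = 0) (hf : Monotone f) (hfo : Tendsto (fun n => f n / n) atTop (𝓝 0)) {a : ℝ}
    (ha : 0 < a) (hfY : ∀ m, ∫⁻ ω, ENNReal.ofReal (f (Y m ω)) ∂P = ENNReal.ofReal a)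
    (hesc : ∀ N, ∀ᵐ ω ∂P, ∀ᶠ m in atTop, Y m ω ∉ Set.Icc 1 N) :
    Tendsto (fun m => ∫⁻ ω, (Y m ω : ℝ≥0∞) ∂P) atTop (𝓝 ⊤) := by
  refine ENNReal.tendsto_nhds_top fun n => ?_
  set δ := a / (2 * (n + 1))
  obtain ⟨N, hN⟩ := exists_ofReal_le_indicator_add_mul hf0 hf hfo (δ := δ) (by positivity)
  have hsmall : ∀ᶠ m in atTop,
      ENNReal.ofReal (f N) * P (Y m ⁻¹' Set.Icc 1 N) < ENNReal.ofReal (a / 2) := by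
    refine Tendsto.eventually_lt_const (ENNReal.ofReal_pos.2 (half_pos ha)) ?_
    simpa using ENNReal.Tendsto.const_mul
      (tendsto_measure_preimage_of_ae_eventually_notMem hY _ (hesc N))
      (Or.inr ENNReal.ofReal_ne_top)
  have hδn : ENNReal.ofReal δ * n ≤ ENNReal.ofReal (a / 2) := by
    rw [← ENNReal.ofReal_natCast, ← ENNReal.ofReal_mul (by positivity)]
    refine ENNReal.ofReal_le_ofReal ?_
    rw [div_mul_eq_mul_div, div_le_div_iff₀ (by positivity) two_pos]
    nlinarith
  filter_upwards [hsmall] with m hm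
  by_contra! hle
  have hlinear : ENNReal.ofReal δ * ∫⁻ ω, (Y m ω : ℝ≥0∞) ∂P ≤ ENNReal.ofReal (a / 2) :=
    (by gcongr : ENNReal.ofReal δ * ∫⁻ ω, (Y m ω : ℝ≥0∞) ∂P ≤ ENNReal.ofReal δ * n).trans hδn
  refine lt_irrefl (ENNReal.ofReal a) ?_
  calc ENNReal.ofReal a
      ≤ ENNReal.ofReal (f N) * P (Y m ⁻¹' Set.Icc 1 N)
          + ENNReal.ofReal δ * ∫⁻ ω, (Y m ω : ℝ≥0∞) ∂P :=
        hfY m ▸ lintegral_ofReal_comp_le (hY m) hN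
    _ < ENNReal.ofReal (a / 2) + ENNReal.ofReal (a / 2) :=
      ENNReal.add_lt_add_of_lt_of_le (ne_top_of_le_ne_top ENNReal.ofReal_ne_top hlinear) hm hlinear
    _ = ENNReal.ofReal a := by rw [← ENNReal.ofReal_add (by positivity) (by positivity), add_halves]

section Chain

variable {Ω : Type*} {X : ℕ → Ω → ℕ}

lemma natFilt_mono : Monotone (natFilt X) := fun _ _ h =>
  biSup_mono fun i hi => by simp only [Finset.mem_range] at hi ⊢; omega

lemma isBDStop_const (n : ℕ) : IsBDStop X fun _ => n := fun _ => MeasurableSet.const _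

lemma IsBDStop.measurableSet_lt {T : Ω → ℕ} (hT : IsBDStop X T) (m : ℕ) :
    MeasurableSet[natFilt X m] {ω | m < T ω} := by
  have : {ω | m < T ω} = ⋂ j ∈ Set.Iic m, {ω | T ω = j}ᶜ := by
    ext ω
    simp only [Set.mem_ofPred_eq, Set.mem_iInter, Set.mem_Iic, Set.mem_compl_iff]
    exact ⟨fun h j hj hT => by omega, fun h => not_le.1 fun hT => h _ hT rfl⟩
  rw [this]
  exact MeasurableSet.biInter (Set.to_countable _) fun j hj => (natFilt_mono hj _ (hT j)).compl

lemma hit0_eq_natCast {ω : Ω} {j : ℕ} (h : hit0 X ω = j) : X j ω = 0 := by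
  obtain ⟨m, hm, hmj⟩ : hit0 X ω ∈ (fun m : ℕ => (m : ℕ∞)) '' {m | X m ω ∈ ({0} : Set ℕ)} := by
    refine csInf_mem (Set.nonempty_iff_ne_empty.2 fun hS => ?_)
    rw [hit0, hitTime, hS, sInf_empty] at h
    exact ENat.top_ne_natCast j h
  rw [h, Nat.cast_inj] at hmj
  exact hmj ▸ hm

variable [MeasurableSpace Ω] {P : Measure Ω} {k : ℕ} {l r : ℕ → ℝ}

lemma natFilt_le (hX : ∀ m, Measurable (X m)) (m : ℕ) : natFilt X m ≤ ‹MeasurableSpace Ω› :=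
  iSup₂_le fun i _ => (hX i).comap_le

lemma IsBDStop.measurable (hX : ∀ m, Measurable (X m)) {T : Ω → ℕ} (hT : IsBDStop X T) :
    Measurable T :=
  measurable_to_countable' fun j => natFilt_le hX j _ (hT j)

namespace IsBDChain

lemma ae_step (hC : IsBDChain P X k l r) :
    ∀ᵐ ω ∂P, ∀ m n, X m ω = n + 1 → X (m + 1) ω = n + 2 ∨ X (m + 1) ω = n := by
  have := hC.isProb
  refine ae_all_iff.2 fun m => ae_all_iff.2 fun n => ?_
  set E := {ω | X m ω = n + 1}
  set U := {ω | X m ω = n + 1 ∧ X (m + 1) ω = n + 1 + 1}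
  set D := {ω | X m ω = n + 1 ∧ X (m + 1) ω = n + 1 - 1}
  have hmeas : ∀ i j, MeasurableSet {ω | X i ω = j} :=
    fun i j => hC.meas i (measurableSet_singleton j)
  have hUm : MeasurableSet U := (hmeas m _).inter (hmeas (m + 1) _)
  have hDm : MeasurableSet D := (hmeas m _).inter (hmeas (m + 1) _)
  have hU := hC.step_up m (n + 1) (Nat.le_add_left 1 n) Set.univ MeasurableSet.univ
  have hD := hC.step_down m (n + 1) (Nat.le_add_left 1 n) Set.univ MeasurableSet.univ
  simp only [Set.univ_inter] at hU hD
  have hUD : P (U ∪ D) = P E := by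
    rw [measure_union (Set.disjoint_left.2 fun ω hU hD => by have := hU.2; have := hD.2; omega)
      hDm, hU, hD, ← add_mul, ← ENNReal.ofReal_add
      (hC.r_pos _ (Nat.le_add_left 1 n)).le (hC.l_pos _ (Nat.le_add_left 1 n)).le, add_comm,
      hC.lr_one _ (Nat.le_add_left 1 n), ENNReal.ofReal_one, one_mul]
  have hnull : P (E \ (U ∪ D)) = 0 := by
    rw [measure_sdiff (s₁ := E) (Set.union_subset (fun ω h => h.1) fun ω h => h.1)
      (hUm.union hDm).nullMeasurableSet (measure_ne_top P _), hUD, tsub_self]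
  filter_upwards [measure_eq_zero_iff_ae_notMem.1 hnull] with ω hω hE
  by_contra h
  exact hω ⟨hE, by rintro (⟨-, h'⟩ | ⟨-, h'⟩) <;> omega⟩

lemma ae_le_add (hC : IsBDChain P X k l r) : ∀ᵐ ω ∂P, ∀ j, X j ω ≤ k + j := by
  filter_upwards [hC.init, hC.absorb, hC.ae_step] with ω h0 habs hstep j
  induction j with
  | zero => simp [h0]
  | succ j ih =>
    rcases hX : X j ω with _ | n
    · rw [habs j hX]; omega
    · rcases hstep j n hX with h | h <;> omega

lemma setLIntegral_next_eq (hC : IsBDChain P X k l r) {m n : ℕ} {A : Set Ω}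
    (hA : MeasurableSet[natFilt X m] A) (g : ℕ → ℝ≥0∞) :
    ∫⁻ ω in A ∩ X m ⁻¹' {n + 1}, g (X (m + 1) ω) ∂P
      = (ENNReal.ofReal (r (n + 1)) * g (n + 2) + ENNReal.ofReal (l (n + 1)) * g n)
        * P (A ∩ X m ⁻¹' {n + 1}) := by
  set B := A ∩ X m ⁻¹' {n + 1}
  have hB : MeasurableSet B :=
    (natFilt_le hC.meas m _ hA).inter (hC.meas m (measurableSet_singleton _))
  have hup : MeasurableSet (X (m + 1) ⁻¹' {n + 2}) := hC.meas _ (measurableSet_singleton _)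
  have hdown : MeasurableSet (X (m + 1) ⁻¹' {n}) := hC.meas _ (measurableSet_singleton _)
  have hsplit : ∀ᵐ ω ∂P.restrict B, g (X (m + 1) ω)
      = (X (m + 1) ⁻¹' {n + 2}).indicator (fun _ => g (n + 2)) ω
        + (X (m + 1) ⁻¹' {n}).indicator (fun _ => g n) ω := by
    filter_upwards [ae_restrict_of_ae hC.ae_step, ae_restrict_mem hB] with ω hstep hω
    rcases hstep m n hω.2 with h | h <;> simp [Set.indicator, h]
  have hU := hC.step_up m (n + 1) (Nat.le_add_left 1 n) A hA
  have hD := hC.step_down m (n + 1) (Nat.le_add_left 1 n) A hA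
  rw [show A ∩ {ω | X m ω = n + 1} = B from rfl] at hU hD
  have hUB : X (m + 1) ⁻¹' {n + 2} ∩ B = A ∩ {ω | X m ω = n + 1 ∧ X (m + 1) ω = n + 1 + 1} := by
    ext; simp [B]; tauto
  have hDB : X (m + 1) ⁻¹' {n} ∩ B = A ∩ {ω | X m ω = n + 1 ∧ X (m + 1) ω = n + 1 - 1} := by
    ext; simp [B]; tauto
  rw [lintegral_congr_ae hsplit, lintegral_add_left (measurable_const.indicator hup),
    lintegral_indicator_const hup, lintegral_indicator_const hdown, Measure.restrict_apply hup,
    Measure.restrict_apply hdown, hUB, hDB, hU, hD]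
  ring

lemma setLIntegral_poisson_step (hC : IsBDChain P X k l r) {g e : ℕ → ℝ≥0∞}
    (hg : SolvesPoissonEq l r g e) (he : e 0 = 0) {m : ℕ} {A : Set Ω}
    (hA : MeasurableSet[natFilt X m] A) :
    ∫⁻ ω in A, (g (X (m + 1) ω) + e (X m ω)) ∂P = ∫⁻ ω in A, g (X m ω) ∂P := by
  have hA' := natFilt_le hC.meas m _ hA
  rw [setLIntegral_eq_tsum_fiber hA' (hC.meas m), setLIntegral_eq_tsum_fiber hA' (hC.meas m)]
  refine tsum_congr fun n => ?_
  have hB : MeasurableSet (A ∩ X m ⁻¹' {n}) := hA'.inter (hC.meas m (measurableSet_singleton n))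
  have hXm : ∀ f : ℕ → ℝ≥0∞, Set.EqOn (fun ω => f (X m ω)) (fun _ => f n) (A ∩ X m ⁻¹' {n}) :=
    fun f ω hω => congrArg f hω.2
  rw [setLIntegral_congr_fun hB (hXm g), setLIntegral_const]
  rcases n with _ | n
  · rw [setLIntegral_congr_fun_ae hB ?_, setLIntegral_const]
    filter_upwards [hC.absorb] with ω habs hω
    rw [habs m hω.2, hω.2, he, add_zero]
  · have hgm : Measurable fun ω => g (X (m + 1) ω) := measurable_from_nat.comp (hC.meas _)
    rw [lintegral_add_left hgm,
      setLIntegral_congr_fun hB (hXm e), setLIntegral_const, setLIntegral_next_eq hC hA, ← add_mul,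
      hg n]

theorem lintegral_stopped_add_sum_eq (hC : IsBDChain P X k l r) {g e : ℕ → ℝ≥0∞}
    (hg : SolvesPoissonEq l r g e) (he : e 0 = 0) {T : Ω → ℕ} (hT : IsBDStop X T) (m : ℕ) :
    ∫⁻ ω, (g (X (min (T ω) m) ω) + ∑ i ∈ range (min (T ω) m), e (X i ω)) ∂P = g k := by
  have := hC.isProb
  induction m with
  | zero =>
    rw [lintegral_congr_ae (g := fun _ => g k) (hC.init.mono fun ω h => by simp [h]),
      lintegral_const, measure_univ, mul_one]
  | succ m ih =>
    rw [← ih]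
    set B := {ω | m < T ω}
    have hBm : MeasurableSet[natFilt X m] B := hT.measurableSet_lt m
    have hB := natFilt_le hC.meas m _ hBm
    have hS : Measurable fun ω => ∑ i ∈ range m, e (X i ω) :=
      Finset.measurable_sum _ fun i _ => measurable_from_nat.comp (hC.meas i)
    refine (lintegral_add_compl _ hB).symm.trans (Eq.trans ?_ (lintegral_add_compl _ hB))
    congr 1
    · calc ∫⁻ ω in B,
            (g (X (min (T ω) (m + 1)) ω) + ∑ i ∈ range (min (T ω) (m + 1)), e (X i ω)) ∂P
          = ∫⁻ ω in B, ((g (X (m + 1) ω) + e (X m ω)) + ∑ i ∈ range m, e (X i ω)) ∂P :=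
            setLIntegral_congr_fun hB fun ω (hω : m < T ω) => by
              rw [min_eq_right hω, sum_range_succ]; ring
        _ = ∫⁻ ω in B, (g (X m ω) + ∑ i ∈ range m, e (X i ω)) ∂P := by
            rw [lintegral_add_right _ hS, lintegral_add_right _ hS,
              setLIntegral_poisson_step hC hg he hBm]
        _ = ∫⁻ ω in B, (g (X (min (T ω) m) ω) + ∑ i ∈ range (min (T ω) m), e (X i ω)) ∂P :=
            setLIntegral_congr_fun hB fun ω (hω : m < T ω) => by rw [min_eq_right hω.le]
    · exact setLIntegral_congr_fun hB.compl fun ω (hω : ¬ m < T ω) => by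
        rw [min_eq_left (by omega), min_eq_left (by omega)]

theorem lintegral_tsum_le_of_solvesPoissonEq (hC : IsBDChain P X k l r) {g e : ℕ → ℝ≥0∞}
    (hg : SolvesPoissonEq l r g e) (he : e 0 = 0) : ∫⁻ ω, ∑' i, e (X i ω) ∂P ≤ g k := by
  have he_meas : ∀ i, Measurable fun ω => e (X i ω) :=
    fun i => measurable_from_nat.comp (hC.meas i)
  rw [lintegral_tsum fun i => (he_meas i).aemeasurable, ENNReal.tsum_eq_iSup_nat]
  refine iSup_le fun m => ?_
  rw [← lintegral_finsetSum _ fun i _ => he_meas i]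
  calc ∫⁻ ω, ∑ i ∈ range m, e (X i ω) ∂P
      ≤ ∫⁻ ω, (g (X (min m m) ω) + ∑ i ∈ range (min m m), e (X i ω)) ∂P :=
        lintegral_mono fun ω => by rw [min_self]; exact le_add_self
    _ = g k := hC.lintegral_stopped_add_sum_eq hg he (isBDStop_const m) m

theorem lintegral_comp_stopped_eq (hC : IsBDChain P X k l r) {g : ℕ → ℝ≥0∞}
    (hg : SolvesPoissonEq l r g fun _ => 0) (hmono : Monotone g) {c : ℝ≥0∞}
    (hinc : ∀ n, g (n + 1) ≤ g n + c) (hc : c ≠ ⊤) (hgk : g k ≠ ⊤) {T : Ω → ℕ}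
    (hT : IsBDStop X T) (hTint : ∫⁻ ω, (T ω : ℝ≥0∞) ∂P ≠ ⊤) :
    ∫⁻ ω, g (X (T ω) ω) ∂P = g k := by
  have := hC.isProb
  have hTm := hT.measurable hC.meas
  have hgrowth : ∀ j : ℕ, g (k + j) ≤ g k + j * c := by
    intro j
    induction j with
    | zero => simp
    | succ j ih =>
      calc g (k + (j + 1)) ≤ g (k + j) + c := hinc _
        _ ≤ g k + j * c + c := by gcongr
        _ = g k + (j + 1 : ℕ) * c := by push_cast; ring
  have hbound : ∀ m, (fun ω => g (X (min (T ω) m) ω)) ≤ᵐ[P] fun ω => g k + T ω * c := by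
    intro m
    filter_upwards [hC.ae_le_add] with ω hω
    calc g (X (min (T ω) m) ω) ≤ g (k + T ω) := hmono ((hω _).trans (by omega))
      _ ≤ g k + T ω * c := hgrowth _
  have hbound_int : ∫⁻ ω, (g k + T ω * c) ∂P ≠ ⊤ := by
    rw [lintegral_add_left measurable_const, lintegral_const, lintegral_mul_const' _ _ hc]
    finiteness
  have hlim := tendsto_lintegral_of_dominated_convergence _
    (fun m => measurable_apply_index (hTm.min measurable_const)
      fun j => measurable_from_nat.comp (hC.meas j)) hbound hbound_int
    (ae_of_all _ fun ω => tendsto_atTop_of_eventually_const (i₀ := T ω) fun m hm => by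
      rw [min_eq_left hm])
  have hconst : ∀ m, ∫⁻ ω, g (X (min (T ω) m) ω) ∂P = g k := fun m => by
    simpa using hC.lintegral_stopped_add_sum_eq hg rfl hT m
  exact tendsto_nhds_unique hlim (tendsto_const_nhds.congr fun m => (hconst m).symm)

lemma lintegral_xp_stopped (hC : IsBDChain P X k l r)
    (htb : BddAbove (Set.range (tp l r))) {T : Ω → ℕ} (hT : IsBDStop X T)
    (hTint : ∫⁻ ω, (T ω : ℝ≥0∞) ∂P ≠ ⊤) :
    ∫⁻ ω, ENNReal.ofReal (xp l r (X (T ω) ω)) ∂P = ENNReal.ofReal (xp l r k) := by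
  have hl := hC.l_pos
  have hr := hC.r_pos
  obtain ⟨c, hc⟩ := htb
  have hpois := solvesPoissonEq_ofReal hl hr (xp_nonneg hl hr) (fun _ => le_rfl) (e := fun _ => 0)
    fun n => by simpa using xp_harmonic hr hC.lr_one n
  simp only [ENNReal.ofReal_zero] at hpois
  refine hC.lintegral_comp_stopped_eq hpois
    (fun _ _ h => ENNReal.ofReal_le_ofReal (xp_mono hl hr h)) (c := ENNReal.ofReal c)
    (fun n => ?_) ENNReal.ofReal_ne_top ENNReal.ofReal_ne_top hT hTint
  rw [xp_succ]
  exact ENNReal.ofReal_add_le.trans (by gcongr; exact hc ⟨n, rfl⟩)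

lemma ae_eventually_ne_succ (hC : IsBDChain P X k l r) (j : ℕ) :
    ∀ᵐ ω ∂P, ∀ᶠ i in atTop, X i ω ≠ j + 1 := by
  have hl := hC.l_pos
  have hr := hC.r_pos
  set d := r (j + 1) * tp l r (j + 1)
  have hd : 0 < d := mul_pos (hr _ (Nat.le_add_left 1 j)) (tp_pos hl hr _)
  have hpois := solvesPoissonEq_ofReal hl hr (g := fun n => xp l r (min n (j + 1)))
    (e := fun n => if n = j + 1 then d else 0) (fun n => xp_nonneg hl hr _)
    (fun n => by split_ifs <;> positivity) (xp_min_poisson hr hC.lr_one (j + 1))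
  have hfin := hC.lintegral_tsum_le_of_solvesPoissonEq hpois (by simp)
  have hae : ∀ᵐ ω ∂P, ∑' i, ENNReal.ofReal (if X i ω = j + 1 then d else 0) < ⊤ :=
    ae_lt_top (Measurable.tsum fun i =>
        (measurable_from_nat (f := fun n => ENNReal.ofReal (if n = j + 1 then d else 0))).comp
          (hC.meas i))
      (hfin.trans_lt ENNReal.ofReal_lt_top).ne
  filter_upwards [hae] with ω hω
  filter_upwards [(ENNReal.tendsto_atTop_zero_of_tsum_ne_top hω.ne).eventually_lt_const
    (ENNReal.ofReal_pos.2 hd)] with i hi hX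
  simp [hX] at hi

lemma ae_eventually_notMem_Icc (hC : IsBDChain P X k l r) {T : ℕ → Ω → ℕ}
    (hconv : ∀ᵐ ω ∂P, Tendsto (fun m => (T m ω : ℕ∞)) atTop (𝓝 (hit0 X ω))) (N : ℕ) :
    ∀ᵐ ω ∂P, ∀ᶠ m in atTop, X (T m ω) ω ∉ Set.Icc 1 N := by
  filter_upwards [hconv, ae_all_iff.2 hC.ae_eventually_ne_succ] with ω hT hvisits
  cases h : hit0 X ω with
  | top =>
    rw [h, ENat.tendsto_nhds_top_iff_natCast_lt] at hT
    have hT' : Tendsto (fun m => T m ω) atTop atTop :=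
      tendsto_atTop.2 fun b => (hT b).mono fun m hm => by exact_mod_cast hm.le
    refine hT'.eventually (p := fun i => X i ω ∉ Set.Icc 1 N) ?_
    filter_upwards [(Finset.range N).eventually_all.2 fun j _ => hvisits j] with i hi ⟨h1, h2⟩
    exact hi (X i ω - 1) (Finset.mem_range.2 (by omega)) (by omega)
  | coe j =>
    rw [h, ENat.nhds_natCast, tendsto_pure] at hT
    filter_upwards [hT] with m hm
    rw [show T m ω = j by exact_mod_cast hm, hit0_eq_natCast h]
    simp

end IsBDChain

end Chain

theorem stmt2_general {Ω : Type*} [MeasurableSpace Ω] (P : Measure Ω) (X : ℕ → Ω → ℕ)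
    (k : ℕ) (l r : ℕ → ℝ) (hC : IsBDChain P X k l r)
    (htlim : Tendsto (tp l r) atTop (nhds 0))
    (T : ℕ → Ω → ℕ) (hstop : ∀ m, IsBDStop X (T m))
    (hint : ∀ m, ∫⁻ ω, (T m ω : ℝ≥0∞) ∂P < ⊤)
    (hconv : ∀ᵐ ω ∂P, Tendsto (fun m => (T m ω : ℕ∞)) atTop (nhds (hit0 X ω))) :
    Tendsto (fun m => ∫⁻ ω, (X (T m ω) ω : ℝ≥0∞) ∂P) atTop (nhds ⊤) := by
  have := hC.isProb
  have hl := hC.l_pos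
  have hr := hC.r_pos
  exact tendsto_lintegral_top_of_escape
    (fun m => measurable_apply_index ((hstop m).measurable hC.meas) hC.meas)
    xp_zero (xp_mono hl hr) (tendsto_xp_div htlim)
    (zero_lt_one.trans_le (one_le_xp hl hr hC.one_le_k))
    (fun m => hC.lintegral_xp_stopped htlim.bddAbove_range (hstop m) (hint m).ne)
    (hC.ae_eventually_notMem_Icc hconv)

/-- If `t_n → 0`, then for any non-decreasing sequence of stopping
times `T_m` with `E[T_m] < ∞` and `T_m → T_∂` a.s., `E[X_{T_m}] → +∞`. -/
theorem stmt2 {Ω : Type*} [MeasurableSpace Ω] (P : Measure Ω) (X : ℕ → Ω → ℕ)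
    (k : ℕ) (l r : ℕ → ℝ) (hC : IsBDChain P X k l r)
    (htlim : Tendsto (tp l r) atTop (nhds 0))
    (T : ℕ → Ω → ℕ) (hstop : ∀ m, IsBDStop X (T m))
    (hmono : ∀ ω, Monotone fun m => T m ω)
    (hint : ∀ m, ∫⁻ ω, (T m ω : ℝ≥0∞) ∂P < ⊤)
    (hconv : ∀ᵐ ω ∂P, Tendsto (fun m => (T m ω : ℕ∞)) atTop (nhds (hit0 X ω))) :
    Tendsto (fun m => ∫⁻ ω, (X (T m ω) ω : ℝ≥0∞) ∂P) atTop (nhds ⊤) :=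
  stmt2_general P X k l r hC htlim T hstop hint hconv
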